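/- arXiv:1312.3257 — 8 statements merged into one kernel-verified Lean document; each statement's English description precedes it below -/
import Mathlib

section
/- Let n ∈ {1,2,3}, let Ω ⊆ ℝⁿ be open, and let d : (0,∞) × Ω → ℝ³ be twice continuously differentiable with |d(t,x)| = 1 for all (t,x). Define the angular momentum w := d_t × d. Then d_t = d × w everywhere on (0,∞) × Ω, and d satisfies the wave map equation d_tt − Δd = (|∇d|² − |d_t|²) d on (0,∞) × Ω if and only if w_t = Δd × d on (0,∞) × Ω. -/
/-!
Everything follows from differentiating the constraint `d ⬝ d = 1`. Once in time and once in
space this gives `d ⬝ d_t = 0` and `d ⬝ ∂ⱼd = 0`; differentiating these again gives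
`|d_t|² + d ⬝ d_tt = 0` and `|∇d|² + d ⬝ Δd = 0`. Hence the normal component of
`d_tt - Δd` is always `|∇d|² - |d_t|²`, so the wave map equation says exactly that
`(d_tt - Δd) × d = 0`, which is `w_t = Δd × d` because `w_t = d_tt × d`. Finally
`d × (d_t × d) = |d|² d_t - (d ⬝ d_t) d = d_t` by the BAC-CAB rule.
-/

noncomputable section
open scoped BigOperators

/-- Partial derivative in direction `j` of a scalar function on ℝⁿ. -/
def pd {n : ℕ} (j : Fin n) (u : (Fin n → ℝ) → ℝ) (x : Fin n → ℝ) : ℝ :=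
  fderiv ℝ u x (Pi.single j 1)

/-- Laplacian of a scalar function on ℝⁿ. -/
def lap {n : ℕ} (u : (Fin n → ℝ) → ℝ) (x : Fin n → ℝ) : ℝ :=
  ∑ j, pd j (pd j u) x

/-- Time derivative of a time-dependent family of functions. -/
def dtime {α : Type*} {E : Type*} [NormedAddCommGroup E] [NormedSpace ℝ E]
    (f : ℝ → α → E) : ℝ → α → E :=
  fun t x => deriv (fun s => f s x) t

open Filter Topology Set Matrix

section CrossProduct

variable {d v a b : Fin 3 → ℝ}

theorem cross_cross_eq_of_dotProduct_eq_zero (hd : d ⬝ᵥ d = 1) (hv : v ⬝ᵥ d = 0) :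
    d ⨯₃ (v ⨯₃ d) = v := by
  rw [cross_cross_eq_smul_sub_smul', hd, hv, one_smul, zero_smul, sub_zero]

theorem cross_eq_zero_iff_eq_smul (hd : d ⬝ᵥ d = 1) : a ⨯₃ d = 0 ↔ a = (a ⬝ᵥ d) • d := by
  refine ⟨fun h => ?_, fun h => by rw [h, LinearMap.map_smul₂, cross_self, smul_zero]⟩
  have := cross_cross_eq_smul_sub_smul' d a d
  rwa [h, map_zero, hd, one_smul, eq_comm, sub_eq_zero] at this

theorem sub_eq_smul_iff_cross_eq (hd : d ⬝ᵥ d = 1) {c : ℝ} (hc : (a - b) ⬝ᵥ d = c) :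
    a - b = c • d ↔ a ⨯₃ d = b ⨯₃ d := by
  rw [← sub_eq_zero (a := a ⨯₃ d), ← LinearMap.sub_apply, ← map_sub,
    cross_eq_zero_iff_eq_smul hd, hc]

theorem HasDerivAt.cross {f g : ℝ → Fin 3 → ℝ} {f' g' : Fin 3 → ℝ} {t : ℝ}
    (hf : HasDerivAt f f' t) (hg : HasDerivAt g g' t) :
    HasDerivAt (fun s => f s ⨯₃ g s) (f' ⨯₃ g t + f t ⨯₃ g') t := by
  rw [hasDerivAt_pi] at hf hg ⊢
  have key : ∀ i j : Fin 3, HasDerivAt (fun s => f s i * g s j - f s j * g s i)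
      (f' i * g t j - f' j * g t i + (f t i * g' j - f t j * g' i)) t := fun i j =>
    (((hf i).mul (hg j)).sub ((hf j).mul (hg i))).congr_deriv (by ring)
  intro k
  fin_cases k <;> simpa [cross_apply] using key _ _

end CrossProduct

section DotProduct

variable {ι : Type*} [Fintype ι] {f g : ℝ → ι → ℝ} {f' g' : ι → ℝ} {t c : ℝ}

theorem HasDerivAt.dotProduct (hf : HasDerivAt f f' t) (hg : HasDerivAt g g' t) :
    HasDerivAt (fun s => f s ⬝ᵥ g s) (f' ⬝ᵥ g t + f t ⬝ᵥ g') t := by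
  rw [hasDerivAt_pi] at hf hg
  have h := HasDerivAt.fun_sum (u := Finset.univ) fun k _ => (hf k).fun_mul (hg k)
  rwa [Finset.sum_add_distrib] at h

theorem HasDerivAt.dotProduct_add_dotProduct_eq_zero (hf : HasDerivAt f f' t)
    (hg : HasDerivAt g g' t) (hc : ∀ᶠ s in 𝓝 t, f s ⬝ᵥ g s = c) :
    f' ⬝ᵥ g t + f t ⬝ᵥ g' = 0 :=
  (hf.dotProduct hg).unique ((hasDerivAt_const t c).congr_of_eventuallyEq hc)

theorem dotProduct_eq_zero_of_dotProduct_self_eventually_eq (hf : HasDerivAt f f' t)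
    (hc : ∀ᶠ s in 𝓝 t, f s ⬝ᵥ f s = c) : f t ⬝ᵥ f' = 0 := by
  have := hf.dotProduct_add_dotProduct_eq_zero hf hc
  rw [dotProduct_comm f'] at this
  linarith

theorem dotProduct_self_add_dotProduct_eq_zero {f' : ℝ → ι → ℝ} {f'' : ι → ℝ}
    (hf : ∀ᶠ s in 𝓝 t, HasDerivAt f (f' s) s) (hf' : HasDerivAt f' f'' t)
    (hc : ∀ᶠ s in 𝓝 t, f s ⬝ᵥ f s = c) : f' t ⬝ᵥ f' t + f t ⬝ᵥ f'' = 0 := by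
  have horth : ∀ᶠ s in 𝓝 t, f s ⬝ᵥ f' s = 0 := by
    filter_upwards [hf, hc.eventually_nhds] with s hfs hcs
    exact dotProduct_eq_zero_of_dotProduct_self_eventually_eq hfs hcs
  exact hf.self_of_nhds.dotProduct_add_dotProduct_eq_zero hf' horth

end DotProduct

theorem IsOpen.eventually_prodMk_mem {X Y : Type*} [TopologicalSpace X] [TopologicalSpace Y]
    {U : Set (X × Y)} (hU : IsOpen U) {t : X} {x : Y} (h : (t, x) ∈ U) :
    ∀ᶠ s in 𝓝 t, (s, x) ∈ U :=
  (continuous_id.prodMk continuous_const).continuousAt.preimage_mem_nhds (hU.mem_nhds h)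

section TimeDerivative

variable {E F : Type*} [NormedAddCommGroup E] [NormedSpace ℝ E] [NormedAddCommGroup F]
  [NormedSpace ℝ F] {U : Set (ℝ × E)} {t : ℝ} {x : E}

theorem DifferentiableAt.hasDerivAt_slice {f : ℝ → E → F}
    (hf : DifferentiableAt ℝ (fun p : ℝ × E => f p.1 p.2) (t, x)) :
    HasDerivAt (fun s => f s x) (fderiv ℝ (fun p : ℝ × E => f p.1 p.2) (t, x) (1, 0)) t := by
  have hline : HasDerivAt (fun s : ℝ => (s, x)) ((1 : ℝ), (0 : E)) t :=
    (hasDerivAt_id t).prodMk (hasDerivAt_const t x)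
  exact hf.hasFDerivAt.comp_hasDerivAt t hline

theorem ContDiffOn.dtime {f : ℝ → E → F} (hU : IsOpen U) {m : ℕ}
    (hf : ContDiffOn ℝ (m + 1) (fun p : ℝ × E => f p.1 p.2) U) :
    ContDiffOn ℝ m (fun p : ℝ × E => dtime f p.1 p.2) U := by
  refine ((hf.fderiv_of_isOpen hU le_rfl).clm_apply
    (contDiffOn_const (c := ((1 : ℝ), (0 : E))))).congr fun p hp => ?_
  exact ((hf.differentiableOn (by simp)).differentiableAt (hU.mem_nhds hp)).hasDerivAt_slice.deriv

theorem eventually_hasDerivAt_dtime {f : ℝ → E → F} (hU : IsOpen U)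
    (hf : ContDiffOn ℝ 1 (fun p : ℝ × E => f p.1 p.2) U) (h : (t, x) ∈ U) :
    ∀ᶠ s in 𝓝 t, HasDerivAt (fun s => f s x) (dtime f s x) s := by
  filter_upwards [hU.eventually_prodMk_mem h] with s hs
  have hdiff := (hf.differentiableOn one_ne_zero).differentiableAt (hU.mem_nhds hs)
  exact (hdiff.hasDerivAt_slice).differentiableAt.hasDerivAt

variable {ι : Type*} [Fintype ι] {d : ℝ → E → ι → ℝ} {c : ℝ}

theorem dotProduct_dtime_eq_zero (hU : IsOpen U)
    (hd : ContDiffOn ℝ 1 (fun p : ℝ × E => d p.1 p.2) U)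
    (hc : ∀ p ∈ U, d p.1 p.2 ⬝ᵥ d p.1 p.2 = c) (h : (t, x) ∈ U) :
    d t x ⬝ᵥ dtime d t x = 0 :=
  dotProduct_eq_zero_of_dotProduct_self_eventually_eq
    (eventually_hasDerivAt_dtime hU hd h).self_of_nhds
    ((hU.eventually_prodMk_mem h).mono fun s hs => hc (s, x) hs)

theorem dtime_dotProduct_self_add_dotProduct_dtime_dtime_eq_zero (hU : IsOpen U)
    (hd : ContDiffOn ℝ 2 (fun p : ℝ × E => d p.1 p.2) U)
    (hc : ∀ p ∈ U, d p.1 p.2 ⬝ᵥ d p.1 p.2 = c) (h : (t, x) ∈ U) :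
    dtime d t x ⬝ᵥ dtime d t x + d t x ⬝ᵥ dtime (dtime d) t x = 0 :=
  dotProduct_self_add_dotProduct_eq_zero (eventually_hasDerivAt_dtime hU (hd.of_le one_le_two) h)
    (eventually_hasDerivAt_dtime hU (hd.dtime hU (m := 1)) h).self_of_nhds
    ((hU.eventually_prodMk_mem h).mono fun s hs => hc (s, x) hs)

theorem dtime_dtime_cross_self {d : ℝ → E → Fin 3 → ℝ} (hU : IsOpen U)
    (hd : ContDiffOn ℝ 2 (fun p : ℝ × E => d p.1 p.2) U) (h : (t, x) ∈ U) :
    dtime (fun t x => dtime d t x ⨯₃ d t x) t x = dtime (dtime d) t x ⨯₃ d t x := by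
  have hvel := (eventually_hasDerivAt_dtime hU (hd.of_le one_le_two) h).self_of_nhds
  have hacc := (eventually_hasDerivAt_dtime hU (hd.dtime hU (m := 1)) h).self_of_nhds
  rw [← add_zero (_ ⨯₃ _), ← cross_self (dtime d t x)]
  exact (hacc.cross hvel).deriv

end TimeDerivative

section SpatialDerivative

variable {n : ℕ} {Ω : Set (Fin n → ℝ)} {x : Fin n → ℝ}

theorem hasDerivAt_comp_line_pd {u : (Fin n → ℝ) → ℝ} (j : Fin n) {s : ℝ}
    (hu : DifferentiableAt ℝ u (x + s • Pi.single j 1)) :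
    HasDerivAt (fun r : ℝ => u (x + r • Pi.single j 1)) (pd j u (x + s • Pi.single j 1)) s := by
  have hline : HasDerivAt (fun r : ℝ => x + r • (Pi.single j 1 : Fin n → ℝ)) (Pi.single j 1) s := by
    simpa using ((hasDerivAt_id s).smul_const (Pi.single j 1 : Fin n → ℝ)).const_add x
  exact hu.hasFDerivAt.comp_hasDerivAt s hline

theorem differentiableOn_pd (hΩ : IsOpen Ω) {u : (Fin n → ℝ) → ℝ} (hu : ContDiffOn ℝ 2 u Ω)
    (j : Fin n) : DifferentiableOn ℝ (pd j u) Ω :=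
  ((hu.fderiv_of_isOpen hΩ (m := 1) (by norm_num)).differentiableOn (by norm_num)).clm_apply
    (differentiableOn_const _)

theorem sum_sq_pd_add_dotProduct_lap_eq_zero {ι : Type*} [Fintype ι] (hΩ : IsOpen Ω)
    {e : (Fin n → ℝ) → ι → ℝ} (he : ContDiffOn ℝ 2 e Ω) {c : ℝ}
    (hc : ∀ y ∈ Ω, e y ⬝ᵥ e y = c) (hx : x ∈ Ω) :
    ∑ j, ∑ k, pd j (fun y => e y k) x ^ 2 + e x ⬝ᵥ (fun k => lap (fun y => e y k) x) = 0 := by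
  have hek := contDiffOn_pi.mp he
  have hdir : ∀ j, (fun k => pd j (fun y => e y k) x) ⬝ᵥ (fun k => pd j (fun y => e y k) x)
      + e x ⬝ᵥ (fun k => pd j (pd j (fun y => e y k)) x) = 0 := by
    intro j
    -- restrict `e` to the line through `x` in direction `j` and use the one-variable identity
    have hnear : ∀ᶠ s : ℝ in 𝓝 0, x + s • Pi.single j 1 ∈ Ω :=
      (continuous_const.add (continuous_id.smul continuous_const)).continuousAt.preimage_mem_nhds
        (by simpa using hΩ.mem_nhds hx)
    have hvel : ∀ᶠ s : ℝ in 𝓝 0, HasDerivAt (fun r => e (x + r • Pi.single j 1))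
        (fun k => pd j (fun y => e y k) (x + s • Pi.single j 1)) s :=
      hnear.mono fun s hs => hasDerivAt_pi.mpr fun k => hasDerivAt_comp_line_pd j
        (((hek k).differentiableOn (by norm_num)).differentiableAt (hΩ.mem_nhds hs))
    have hacc : HasDerivAt (fun s : ℝ => fun k => pd j (fun y => e y k) (x + s • Pi.single j 1))
        (fun k => pd j (pd j (fun y => e y k)) (x + (0 : ℝ) • Pi.single j 1)) 0 :=
      hasDerivAt_pi.mpr fun k => hasDerivAt_comp_line_pd j
        ((differentiableOn_pd hΩ (hek k) j).differentiableAt (by simpa using hΩ.mem_nhds hx))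
    simpa using dotProduct_self_add_dotProduct_eq_zero hvel hacc (hnear.mono fun s hs => hc _ hs)
  calc ∑ j, ∑ k, pd j (fun y => e y k) x ^ 2 + e x ⬝ᵥ (fun k => lap (fun y => e y k) x)
      = ∑ j, ((fun k => pd j (fun y => e y k) x) ⬝ᵥ (fun k => pd j (fun y => e y k) x)
          + e x ⬝ᵥ (fun k => pd j (pd j (fun y => e y k)) x)) := by
        simp only [dotProduct, lap, Finset.mul_sum, Finset.sum_add_distrib, sq]
        exact congrArg _ Finset.sum_comm
    _ = 0 := Finset.sum_eq_zero fun j _ => hdir j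

end SpatialDerivative

theorem angular_momentum_formulation_general
    (n : ℕ)
    (Ω : Set (Fin n → ℝ)) (hΩ : IsOpen Ω)
    (d : ℝ → (Fin n → ℝ) → Fin 3 → ℝ)
    (hd : ContDiffOn ℝ 2 (fun p : ℝ × (Fin n → ℝ) => d p.1 p.2) (Set.Ioi 0 ×ˢ Ω))
    (hunit : ∀ t ∈ Set.Ioi (0 : ℝ), ∀ x ∈ Ω, ∑ k, d t x k ^ 2 = 1)
    (w : ℝ → (Fin n → ℝ) → Fin 3 → ℝ)
    (hw : w = fun t x => crossProduct (dtime d t x) (d t x)) :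
    (∀ t ∈ Set.Ioi (0 : ℝ), ∀ x ∈ Ω,
        dtime d t x = crossProduct (d t x) (w t x)) ∧
    ((∀ t ∈ Set.Ioi (0 : ℝ), ∀ x ∈ Ω,
        (fun k => dtime (dtime d) t x k - lap (fun y => d t y k) x)
          = ((∑ j, ∑ k, pd j (fun y => d t y k) x ^ 2)
              - ∑ k, dtime d t x k ^ 2) • d t x)
      ↔ (∀ t ∈ Set.Ioi (0 : ℝ), ∀ x ∈ Ω,
          dtime w t x = crossProduct (fun k => lap (fun y => d t y k) x) (d t x))) := by
  subst hw
  have hU : IsOpen (Ioi (0 : ℝ) ×ˢ Ω) := isOpen_Ioi.prod hΩ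
  have hsphere : ∀ p ∈ Ioi (0 : ℝ) ×ˢ Ω, d p.1 p.2 ⬝ᵥ d p.1 p.2 = 1 := fun p hp => by
    simpa only [dotProduct, sq] using hunit p.1 hp.1 p.2 hp.2
  have hnormal : ∀ t ∈ Ioi (0 : ℝ), ∀ x ∈ Ω,
      (dtime (dtime d) t x - fun k => lap (fun y => d t y k) x) ⬝ᵥ d t x
        = (∑ j, ∑ k, pd j (fun y => d t y k) x ^ 2) - ∑ k, dtime d t x k ^ 2 := by
    intro t ht x hx
    have htime := dtime_dotProduct_self_add_dotProduct_dtime_dtime_eq_zero hU hd hsphere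
      (mk_mem_prod ht hx)
    have hspace := sum_sq_pd_add_dotProduct_lap_eq_zero (e := d t) hΩ
      (hd.comp (contDiffOn_const.prodMk contDiffOn_id) fun y hy => mk_mem_prod ht hy)
      (fun y hy => hsphere (t, y) (mk_mem_prod ht hy)) hx
    have hsq : ∑ k, dtime d t x k ^ 2 = dtime d t x ⬝ᵥ dtime d t x := by
      simp only [dotProduct, sq]
    rw [hsq, sub_dotProduct, dotProduct_comm _ (d t x), dotProduct_comm _ (d t x)]
    linarith
  refine ⟨fun t ht x hx => (cross_cross_eq_of_dotProduct_eq_zero (hsphere _ (mk_mem_prod ht hx))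
      ?_).symm, forall₂_congr fun t ht => forall₂_congr fun x hx => ?_⟩
  · rw [dotProduct_comm]
    exact dotProduct_dtime_eq_zero hU (hd.of_le one_le_two) hsphere (mk_mem_prod ht hx)
  · rw [dtime_dtime_cross_self hU hd (mk_mem_prod ht hx)]
    exact sub_eq_smul_iff_cross_eq (hsphere _ (mk_mem_prod ht hx)) (hnormal t ht x hx)

/-- For a twice continuously differentiable sphere-valued map
`d : (0,∞) × Ω → ℝ³` with angular momentum `w := d_t × d`, one has `d_t = d × w`
on `(0,∞) × Ω`, and `d` solves the wave map equation
`d_tt - Δd = (|∇d|² - |d_t|²) d` there iff `w_t = Δd × d` there. -/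
theorem angular_momentum_formulation
    (n : ℕ) (hn : n = 1 ∨ n = 2 ∨ n = 3)
    (Ω : Set (Fin n → ℝ)) (hΩ : IsOpen Ω)
    (d : ℝ → (Fin n → ℝ) → Fin 3 → ℝ)
    (hd : ContDiffOn ℝ 2 (fun p : ℝ × (Fin n → ℝ) => d p.1 p.2) (Set.Ioi 0 ×ˢ Ω))
    (hunit : ∀ t ∈ Set.Ioi (0 : ℝ), ∀ x ∈ Ω, ∑ k, d t x k ^ 2 = 1)
    (w : ℝ → (Fin n → ℝ) → Fin 3 → ℝ)
    (hw : w = fun t x => crossProduct (dtime d t x) (d t x)) :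
    (∀ t ∈ Set.Ioi (0 : ℝ), ∀ x ∈ Ω,
        dtime d t x = crossProduct (d t x) (w t x)) ∧
    ((∀ t ∈ Set.Ioi (0 : ℝ), ∀ x ∈ Ω,
        (fun k => dtime (dtime d) t x k - lap (fun y => d t y k) x)
          = ((∑ j, ∑ k, pd j (fun y => d t y k) x ^ 2)
              - ∑ k, dtime d t x k ^ 2) • d t x)
      ↔ (∀ t ∈ Set.Ioi (0 : ℝ), ∀ x ∈ Ω,
          dtime w t x = crossProduct (fun k => lap (fun y => d t y k) x) (d t x))) :=
  angular_momentum_formulation_general n Ω hΩ d hd hunit w hw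
end
end

section
/- Let τ > 0 and d, d′, w ∈ ℝ³. Then (d′ − d)/τ = ((d + d′)/2) × w if and only if d′ = V_τ(w) d. -/
/-!
The relation is `(I - Q(a)) d' = (I + Q(a)) d` for `a = (τ/2) w`, so `V_τ(w)` is the Cayley
transform `(I - Q(a))⁻¹ (I + Q(a))` of the skew matrix `Q(a)`. Since
`Q(a)² = a ⊗ a - |a|² I` and `Q(a)(a ⊗ a) = (a ⊗ a)Q(a) = 0`, the matrix `I + Q(a) + a ⊗ a`
is the adjugate `adjOneSubCross a` of `I - Q(a)`, whose determinant `1 + |a|²` is positive;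
multiplying it by `I + Q(a)` gives the bracket in the definition of `V_τ(w)`.
-/

noncomputable section
open scoped BigOperators

/-- Squared Euclidean norm on ℝ³. -/
def sq3 (v : Fin 3 → ℝ) : ℝ := ∑ i, v i ^ 2

/-- The propagation matrix `V_τ(w)` of the angular momentum method, applied to
a vector `v`:
`V_τ(w) = (1 + (τ²/4)|w|²)⁻¹ [ (1 − (τ²/4)|w|²) I + (τ²/2)(w ⊗ w) + τ Q(w) ]`,
where `Q(w)v = v × w` and `(w ⊗ w)v = (w·v) w`. -/
def Vmat (τ : ℝ) (w v : Fin 3 → ℝ) : Fin 3 → ℝ :=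
  (1 + τ ^ 2 / 4 * sq3 w)⁻¹ •
    ((1 - τ ^ 2 / 4 * sq3 w) • v + (τ ^ 2 / 2 * ∑ i, w i * v i) • w
      + τ • crossProduct v w)

open Matrix

section CommRing

variable {R : Type*} [CommRing R]

def adjOneSubCross (a v : Fin 3 → R) : Fin 3 → R := v + v ⨯₃ a + (a ⬝ᵥ v) • a

theorem adjOneSubCross_sub_cross (a x : Fin 3 → R) :
    adjOneSubCross a (x - x ⨯₃ a) = (1 + a ⬝ᵥ a) • x := by
  simp only [adjOneSubCross, map_sub, LinearMap.sub_apply, cross_cross_eq_smul_sub_smul,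
    dotProduct_sub, dot_cross_self, dotProduct_comm x a]
  module

theorem sub_cross_adjOneSubCross (a y : Fin 3 → R) :
    adjOneSubCross a y - adjOneSubCross a y ⨯₃ a = (1 + a ⬝ᵥ a) • y := by
  simp only [adjOneSubCross, map_add, map_smul, LinearMap.add_apply, LinearMap.smul_apply,
    cross_cross_eq_smul_sub_smul, cross_self, dotProduct_comm y a]
  module

theorem adjOneSubCross_add_cross (a v : Fin 3 → R) :
    adjOneSubCross a (v + v ⨯₃ a) =
      (1 - a ⬝ᵥ a) • v + (2 * a ⬝ᵥ v) • a + (2 : R) • v ⨯₃ a := by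
  simp only [adjOneSubCross, map_add, LinearMap.add_apply, cross_cross_eq_smul_sub_smul,
    dotProduct_add, dot_cross_self, dotProduct_comm v a]
  module

end CommRing

theorem sub_cross_eq_iff {K : Type*} [Field K] {a x y : Fin 3 → K} (h : 1 + a ⬝ᵥ a ≠ 0) :
    x - x ⨯₃ a = y ↔ x = (1 + a ⬝ᵥ a)⁻¹ • adjOneSubCross a y := by
  constructor
  · rintro rfl
    rw [adjOneSubCross_sub_cross, inv_smul_smul₀ h]
  · rintro rfl
    rw [map_smul, LinearMap.smul_apply, ← smul_sub, sub_cross_adjOneSubCross, inv_smul_smul₀ h]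

theorem one_add_dotProduct_self_pos {n : Type*} [Fintype n] (a : n → ℝ) : 0 < 1 + a ⬝ᵥ a :=
  add_pos_of_pos_of_nonneg one_pos (dotProduct_self_star_nonneg a)

theorem midpoint_relation_iff {τ : ℝ} (hτ : τ ≠ 0) (d d' w : Fin 3 → ℝ) :
    τ⁻¹ • (d' - d) = ((2 : ℝ)⁻¹ • (d + d')) ⨯₃ w ↔
      d' - d' ⨯₃ ((τ / 2) • w) = d + d ⨯₃ ((τ / 2) • w) := by
  have hscale : τ • (((2 : ℝ)⁻¹ • (d + d')) ⨯₃ w) =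
      d ⨯₃ ((τ / 2) • w) + d' ⨯₃ ((τ / 2) • w) := by
    simp only [map_smul, map_add, LinearMap.smul_apply, LinearMap.add_apply, smul_add, smul_smul]
    ring_nf
  rw [inv_smul_eq_iff₀ hτ, hscale, sub_eq_iff_eq_add, sub_eq_iff_eq_add']
  exact Iff.of_eq (congrArg (d' = ·) (by abel))

theorem Vmat_eq_smul_adjOneSubCross (τ : ℝ) (w v : Fin 3 → ℝ) :
    Vmat τ w v = (1 + ((τ / 2) • w) ⬝ᵥ ((τ / 2) • w))⁻¹ •
      adjOneSubCross ((τ / 2) • w) (v + v ⨯₃ ((τ / 2) • w)) := by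
  have hsq : sq3 w = w ⬝ᵥ w := by simp only [sq3, dotProduct, sq]
  have hdot : ∑ i, w i * v i = w ⬝ᵥ v := rfl
  have hnorm : τ / 2 * (τ / 2 * w ⬝ᵥ w) = τ ^ 2 / 4 * w ⬝ᵥ w := by ring
  rw [adjOneSubCross_add_cross, Vmat, hsq, hdot]
  simp only [dotProduct_smul, smul_dotProduct, map_smul, smul_eq_mul, hnorm]
  congr 1
  module

/-- The implicit midpoint relation
`(d′ − d)/τ = ((d + d′)/2) × w` holds iff `d′ = V_τ(w) d`. -/
theorem midpoint_step_iff_Vmat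
    (τ : ℝ) (hτ : 0 < τ) (d d' w : Fin 3 → ℝ) :
    τ⁻¹ • (d' - d) = crossProduct ((2 : ℝ)⁻¹ • (d + d')) w ↔ d' = Vmat τ w d := by
  rw [midpoint_relation_iff hτ.ne', sub_cross_eq_iff (one_add_dotProduct_self_pos _).ne',
    Vmat_eq_smul_adjOneSubCross]
end
end

section
/- Let M ≥ 1, h = 1/M, Δt > 0, and let dᵐ, dᵐ⁺¹, wᵐ, wᵐ⁺¹ : (ℤ/Mℤ)³ → ℝ³ be periodic grid functions satisfying, at every grid point i, (dᵐ⁺¹_i − dᵐ_i)/Δt = d^{m+1/2}_i × w^{m+1/2}_i and (wᵐ⁺¹_i − wᵐ_i)/Δt = (Δ_h d^{m+1/2})_i × d^{m+1/2}_i, where d^{m+1/2} = (dᵐ + dᵐ⁺¹)/2 and w^{m+1/2} = (wᵐ + wᵐ⁺¹)/2. Then (i) |dᵐ⁺¹_i| = |dᵐ_i| for every grid point i, and (ii) the discrete energy is conserved: ½ h³ Σ_i (|∇_h dᵐ⁺¹(i)|² + |wᵐ⁺¹(i)|²) = ½ h³ Σ_i (|∇_h dᵐ(i)|² + |wᵐ(i)|²).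 -/
/-! Both updates are cross products with midpoint values. Dotting the `d`-update with
`d^{m+1/2}` kills its right side, so `|dᵐ⁺¹|² = |dᵐ|²`. Dotting the `w`-update with `w^{m+1/2}`
and permuting the triple product turns the change of `|w|²` into `2 (dᵐ⁺¹ - dᵐ) · Δ_h d^{m+1/2}`,
whose sum over the periodic grid is, by summation by parts, minus the change of `Σ |∇_h d|²`. -/

noncomputable section
open scoped BigOperators
open Matrix

/-- Euclidean norm on ℝ³. -/
def enorm3 (v : Fin 3 → ℝ) : ℝ := Real.sqrt (∑ i, v i ^ 2)

/-- Forward difference `D⁺_j` of a periodic grid function on `(ℤ/Mℤ)³`. -/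
def Dp {M : ℕ} (h : ℝ) (u : (Fin 3 → ZMod M) → Fin 3 → ℝ) (j : Fin 3)
    (i : Fin 3 → ZMod M) : Fin 3 → ℝ :=
  h⁻¹ • (u (i + Pi.single j 1) - u i)

/-- Backward difference `D⁻_j`. -/
def Dm {M : ℕ} (h : ℝ) (u : (Fin 3 → ZMod M) → Fin 3 → ℝ) (j : Fin 3)
    (i : Fin 3 → ZMod M) : Fin 3 → ℝ :=
  h⁻¹ • (u i - u (i - Pi.single j 1))

/-- Discrete Laplacian `Δ_h = Σ_j D⁺_j D⁻_j`. -/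
def lapl {M : ℕ} (h : ℝ) (u : (Fin 3 → ZMod M) → Fin 3 → ℝ)
    (i : Fin 3 → ZMod M) : Fin 3 → ℝ :=
  ∑ j, Dp h (Dm h u j) j i

theorem sum_sq_eq_dotProduct_self {n : Type*} [Fintype n] {R : Type*} [CommSemiring R]
    (v : n → R) : ∑ k, v k ^ 2 = v ⬝ᵥ v := by
  simp only [dotProduct, sq]

theorem sub_dotProduct_add {n : Type*} [Fintype n] {R : Type*} [CommRing R] (x y : n → R) :
    (x - y) ⬝ᵥ (x + y) = x ⬝ᵥ x - y ⬝ᵥ y := by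
  simp only [sub_dotProduct, dotProduct_add, dotProduct_comm y x]
  ring

theorem sub_dotProduct_midpoint {n : Type*} [Fintype n] {K : Type*} [Field K] (x y : n → K) :
    (x - y) ⬝ᵥ ((2 : K)⁻¹ • (y + x)) = (2 : K)⁻¹ * (x ⬝ᵥ x - y ⬝ᵥ y) := by
  rw [dotProduct_smul, add_comm, sub_dotProduct_add, smul_eq_mul]

section Midpoint

variable (t : ℝ) (x x' y y' ℓ : Fin 3 → ℝ)

theorem dotProduct_self_eq_of_sub_eq_midpoint_cross
    (hx : x' - x = t • (((2 : ℝ)⁻¹ • (x + x')) ⨯₃ y)) : x' ⬝ᵥ x' = x ⬝ᵥ x := by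
  have h := congrArg (· ⬝ᵥ ((2 : ℝ)⁻¹ • (x + x'))) hx
  simp only [sub_dotProduct_midpoint, smul_dotProduct] at h
  rw [dotProduct_comm (_ ⨯₃ y), dot_self_cross, smul_zero] at h
  linarith

theorem dotProduct_self_sub_of_sub_eq_cross_midpoint
    (hx : x' - x = t • (((2 : ℝ)⁻¹ • (x + x')) ⨯₃ ((2 : ℝ)⁻¹ • (y + y'))))
    (hy : y' - y = t • (ℓ ⨯₃ ((2 : ℝ)⁻¹ • (x + x')))) :
    y' ⬝ᵥ y' - y ⬝ᵥ y = 2 * ((x' - x) ⬝ᵥ ℓ) := by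
  have h := congrArg (· ⬝ᵥ ((2 : ℝ)⁻¹ • (y + y'))) hy
  simp only [sub_dotProduct_midpoint, smul_dotProduct] at h
  rw [dotProduct_comm (ℓ ⨯₃ _)] at h
  rw [hx, smul_dotProduct, dotProduct_comm _ ℓ, triple_product_permutation,
    triple_product_permutation, ← h]
  ring

end Midpoint

theorem sum_dotProduct_shift_sub {G : Type*} [AddCommGroup G] [Fintype G] {n : Type*} [Fintype n]
    {R : Type*} [CommRing R] (f g : G → n → R) (s : G) :
    ∑ i, f i ⬝ᵥ (g (i + s) - g i) = -∑ i, (f i - f (i - s)) ⬝ᵥ g i := by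
  have hshift : ∑ i, f i ⬝ᵥ g (i + s) = ∑ i, f (i - s) ⬝ᵥ g i :=
    Fintype.sum_equiv (Equiv.addRight s) _ _ (fun i => by simp)
  simp only [dotProduct_sub, sub_dotProduct, Finset.sum_sub_distrib, hshift]
  ring

section Grid

variable {M : ℕ} (h : ℝ)

theorem sum_dotProduct_Dp [NeZero M] (f g : (Fin 3 → ZMod M) → Fin 3 → ℝ) (j : Fin 3) :
    ∑ i, f i ⬝ᵥ Dp h g j i = -∑ i, Dm h f j i ⬝ᵥ g i := by
  simp only [Dp, Dm, dotProduct_smul, smul_dotProduct, ← Finset.smul_sum, ← smul_neg,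
    sum_dotProduct_shift_sub]

theorem sum_dotProduct_lapl [NeZero M] (u v : (Fin 3 → ZMod M) → Fin 3 → ℝ) :
    ∑ i, u i ⬝ᵥ lapl h v i = -∑ i, ∑ j, Dm h u j i ⬝ᵥ Dm h v j i := by
  simp only [lapl, dotProduct_sum]
  rw [Finset.sum_comm, Finset.sum_congr rfl fun j _ => sum_dotProduct_Dp h u (Dm h v j) j,
    Finset.sum_comm]
  simp only [Finset.sum_neg_distrib]

theorem Dm_sub_dotProduct_Dm_midpoint (u u' : (Fin 3 → ZMod M) → Fin 3 → ℝ) (j : Fin 3)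
    (i : Fin 3 → ZMod M) :
    Dm h (fun t => u' t - u t) j i ⬝ᵥ Dm h (fun t => (2 : ℝ)⁻¹ • (u t + u' t)) j i
      = (2 : ℝ)⁻¹ * (Dm h u' j i ⬝ᵥ Dm h u' j i - Dm h u j i ⬝ᵥ Dm h u j i) := by
  have hsub : Dm h (fun t => u' t - u t) j i = Dm h u' j i - Dm h u j i := by
    simp only [Dm, ← smul_sub]; abel_nf
  have hmid : Dm h (fun t => (2 : ℝ)⁻¹ • (u t + u' t)) j i
      = (2 : ℝ)⁻¹ • (Dm h u j i + Dm h u' j i) := by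
    simp only [Dm, smul_comm h⁻¹ (2 : ℝ)⁻¹, ← smul_add, ← smul_sub]; abel_nf
  rw [hsub, hmid, sub_dotProduct_midpoint]

/-- Discrete analogue of `∫ (u' - u) · Δ((u + u')/2) = -½ (‖∇u'‖² - ‖∇u‖²)`. -/
theorem sum_sub_dotProduct_lapl_midpoint [NeZero M] (u u' : (Fin 3 → ZMod M) → Fin 3 → ℝ) :
    ∑ i, (u' i - u i) ⬝ᵥ lapl h (fun t => (2 : ℝ)⁻¹ • (u t + u' t)) i
      = -((2 : ℝ)⁻¹ * (∑ i, ∑ j, Dm h u' j i ⬝ᵥ Dm h u' j i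
          - ∑ i, ∑ j, Dm h u j i ⬝ᵥ Dm h u j i)) := by
  rw [sum_dotProduct_lapl h (fun t => u' t - u t)]
  simp only [Dm_sub_dotProduct_Dm_midpoint, Finset.mul_sum, Finset.sum_sub_distrib, mul_sub]

end Grid

theorem scheme_preserves_length_and_energy_general
    (M : ℕ) [NeZero M] (h Δt : ℝ) (hΔt : 0 < Δt)
    (dm dm1 wm wm1 : (Fin 3 → ZMod M) → Fin 3 → ℝ)
    (heq1 : ∀ i, Δt⁻¹ • (dm1 i - dm i)
      = crossProduct ((2 : ℝ)⁻¹ • (dm i + dm1 i)) ((2 : ℝ)⁻¹ • (wm i + wm1 i)))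
    (heq2 : ∀ i, Δt⁻¹ • (wm1 i - wm i)
      = crossProduct (lapl h (fun j => (2 : ℝ)⁻¹ • (dm j + dm1 j)) i)
          ((2 : ℝ)⁻¹ • (dm i + dm1 i))) :
    (∀ i, enorm3 (dm1 i) = enorm3 (dm i)) ∧
    (1 / 2 : ℝ) * (h ^ 3 * ∑ i, ((∑ j, ∑ k, Dm h dm1 j i k ^ 2) + ∑ k, wm1 i k ^ 2))
      = (1 / 2 : ℝ) * (h ^ 3 * ∑ i, ((∑ j, ∑ k, Dm h dm j i k ^ 2) + ∑ k, wm i k ^ 2)) := by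
  have hd : ∀ i, dm1 i - dm i
      = Δt • (((2 : ℝ)⁻¹ • (dm i + dm1 i)) ⨯₃ ((2 : ℝ)⁻¹ • (wm i + wm1 i))) := fun i => by
    rw [← heq1, smul_inv_smul₀ hΔt.ne']
  have hw : ∀ i, wm1 i - wm i
      = Δt • (lapl h (fun j => (2 : ℝ)⁻¹ • (dm j + dm1 j)) i ⨯₃ ((2 : ℝ)⁻¹ • (dm i + dm1 i))) :=
    fun i => by rw [← heq2, smul_inv_smul₀ hΔt.ne']
  simp only [enorm3, sum_sq_eq_dotProduct_self]
  refine ⟨fun i => by rw [dotProduct_self_eq_of_sub_eq_midpoint_cross _ _ _ _ (hd i)], ?_⟩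
  have hwork : ∑ i, (wm1 i ⬝ᵥ wm1 i - wm i ⬝ᵥ wm i)
      = 2 * ∑ i, (dm1 i - dm i) ⬝ᵥ lapl h (fun j => (2 : ℝ)⁻¹ • (dm j + dm1 j)) i := by
    rw [Finset.mul_sum]
    exact Finset.sum_congr rfl fun i _ =>
      dotProduct_self_sub_of_sub_eq_cross_midpoint _ _ _ _ _ _ (hd i) (hw i)
  rw [sum_sub_dotProduct_lapl_midpoint, Finset.sum_sub_distrib] at hwork
  congr 2
  simp only [Finset.sum_add_distrib]
  linarith

/-- One step of the angular momentum scheme preserves the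
pointwise length `|dᵐ⁺¹_i| = |dᵐ_i|` and the discrete energy
`½ h³ Σ_i (|∇_h d(i)|² + |w(i)|²)`. -/
theorem scheme_preserves_length_and_energy
    (M : ℕ) [NeZero M] (hM : 1 ≤ M) (h Δt : ℝ) (hh : h = 1 / M) (hΔt : 0 < Δt)
    (dm dm1 wm wm1 : (Fin 3 → ZMod M) → Fin 3 → ℝ)
    (heq1 : ∀ i, Δt⁻¹ • (dm1 i - dm i)
      = crossProduct ((2 : ℝ)⁻¹ • (dm i + dm1 i)) ((2 : ℝ)⁻¹ • (wm i + wm1 i)))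
    (heq2 : ∀ i, Δt⁻¹ • (wm1 i - wm i)
      = crossProduct (lapl h (fun j => (2 : ℝ)⁻¹ • (dm j + dm1 j)) i)
          ((2 : ℝ)⁻¹ • (dm i + dm1 i))) :
    (∀ i, enorm3 (dm1 i) = enorm3 (dm i)) ∧
    (1 / 2 : ℝ) * (h ^ 3 * ∑ i, ((∑ j, ∑ k, Dm h dm1 j i k ^ 2) + ∑ k, wm1 i k ^ 2))
      = (1 / 2 : ℝ) * (h ^ 3 * ∑ i, ((∑ j, ∑ k, Dm h dm j i k ^ 2) + ∑ k, wm i k ^ 2)) :=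
  scheme_preserves_length_and_energy_general M h Δt hΔt dm dm1 wm wm1 heq1 heq2
end
end

section
/- Let h > 0 and let u = (u⁽¹⁾, u⁽²⁾, u⁽³⁾) : ℤ³ → ℝ³. Then at every point of ℤ³, u × Δ_h u equals the row-wise forward divergence Div_h of the 3 × 3 matrix whose rows are u⁽²⁾∇_h u⁽³⁾ − u⁽³⁾∇_h u⁽²⁾, u⁽³⁾∇_h u⁽¹⁾ − u⁽¹⁾∇_h u⁽³⁾, and u⁽¹⁾∇_h u⁽²⁾ − u⁽²⁾∇_h u⁽¹⁾. -/
noncomputable section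
open scoped BigOperators

/-- Forward difference `D⁺_j` of a scalar function on the grid ℤ³. -/
def DpZ (h : ℝ) (u : (Fin 3 → ℤ) → ℝ) (j : Fin 3) (i : Fin 3 → ℤ) : ℝ :=
  (u (i + Pi.single j 1) - u i) / h

/-- Backward difference `D⁻_j` of a scalar function on ℤ³. -/
def DmZ (h : ℝ) (u : (Fin 3 → ℤ) → ℝ) (j : Fin 3) (i : Fin 3 → ℤ) : ℝ :=
  (u i - u (i - Pi.single j 1)) / h

/-- Discrete Laplacian `Δ_h = Σ_j D⁺_j D⁻_j` on ℤ³. -/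
def laplZ (h : ℝ) (u : (Fin 3 → ℤ) → ℝ) (i : Fin 3 → ℤ) : ℝ :=
  ∑ j, DpZ h (DmZ h u j) j i

/-- Forward divergence `Div_h v = Σ_j D⁺_j v⁽ʲ⁾` of a vector field on ℤ³. -/
def divZ (h : ℝ) (v : (Fin 3 → ℤ) → Fin 3 → ℝ) (i : Fin 3 → ℤ) : ℝ :=
  ∑ j, DpZ h (fun y => v y j) j i

/-
Both sides are built from the discrete Leibniz rule
`D⁺(a · D⁻b) = a · D⁺D⁻b + D⁺a · D⁺b`, whose second term is symmetric in `a` and `b`.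
Hence `Div_h (a ∇_h b − b ∇_h a) = a Δ_h b − b Δ_h a`, and the `r`-th component of
`u × Δ_h u` is exactly this expression for `a = u⁽ʳ⁺¹⁾`, `b = u⁽ʳ⁺²⁾`.
-/

theorem cross_apply_cyclic {R : Type*} [CommRing R] (v w : Fin 3 → R) (r : Fin 3) :
    crossProduct v w r = v (r + 1) * w (r + 2) - v (r + 2) * w (r + 1) := by
  fin_cases r <;> simp [cross_apply]

theorem DmZ_add_single (h : ℝ) (u : (Fin 3 → ℤ) → ℝ) (j : Fin 3) (i : Fin 3 → ℤ) :
    DmZ h u j (i + Pi.single j 1) = DpZ h u j i := by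
  simp only [DmZ, DpZ, add_sub_cancel_right]

theorem DpZ_mul (h : ℝ) (a b : (Fin 3 → ℤ) → ℝ) (j : Fin 3) (i : Fin 3 → ℤ) :
    DpZ h (fun y => a y * b y) j i = a i * DpZ h b j i + DpZ h a j i * b (i + Pi.single j 1) := by
  simp only [DpZ]
  ring

theorem DpZ_mul_DmZ_sub (h : ℝ) (a b : (Fin 3 → ℤ) → ℝ) (j : Fin 3) (i : Fin 3 → ℤ) :
    DpZ h (fun y => a y * DmZ h b j y - b y * DmZ h a j y) j i
      = a i * DpZ h (DmZ h b j) j i - b i * DpZ h (DmZ h a j) j i := by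
  have hsub : DpZ h (fun y => a y * DmZ h b j y - b y * DmZ h a j y) j i
      = DpZ h (fun y => a y * DmZ h b j y) j i - DpZ h (fun y => b y * DmZ h a j y) j i := by
    simp only [DpZ]
    ring
  rw [hsub, DpZ_mul, DpZ_mul, DmZ_add_single, DmZ_add_single]
  ring

theorem divZ_mul_DmZ_sub (h : ℝ) (a b : (Fin 3 → ℤ) → ℝ) (i : Fin 3 → ℤ) :
    divZ h (fun y j => a y * DmZ h b j y - b y * DmZ h a j y) i
      = a i * laplZ h b i - b i * laplZ h a i := by
  simp only [divZ, laplZ, DpZ_mul_DmZ_sub, Finset.mul_sum, Finset.sum_sub_distrib]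

theorem discrete_cross_laplacian_divergence_form_general
    (h : ℝ) (u : (Fin 3 → ℤ) → Fin 3 → ℝ) :
    ∀ i : Fin 3 → ℤ, ∀ r : Fin 3,
      crossProduct (u i) (fun k => laplZ h (fun y => u y k) i) r
        = divZ h (fun y j =>
            u y (r + 1) * DmZ h (fun z => u z (r + 2)) j y
              - u y (r + 2) * DmZ h (fun z => u z (r + 1)) j y) i := by
  intro i r
  rw [cross_apply_cyclic, divZ_mul_DmZ_sub]

/-- For `u : ℤ³ → ℝ³`, at every point, `u × Δ_h u` equals the
row-wise forward divergence of the matrix with rows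
`u⁽ᵏ⁾∇_h u⁽ˡ⁾ − u⁽ˡ⁾∇_h u⁽ᵏ⁾` for cyclic pairs `(k,ℓ)`. -/
theorem discrete_cross_laplacian_divergence_form
    (h : ℝ) (hh : 0 < h) (u : (Fin 3 → ℤ) → Fin 3 → ℝ) :
    ∀ i : Fin 3 → ℤ, ∀ r : Fin 3,
      crossProduct (u i) (fun k => laplZ h (fun y => u y k) i) r
        = divZ h (fun y j =>
            u y (r + 1) * DmZ h (fun z => u z (r + 2)) j y
              - u y (r + 2) * DmZ h (fun z => u z (r + 1)) j y) i :=
  discrete_cross_laplacian_divergence_form_general h u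
end
end

section
/- Let τ > 0 and define f : ℝ³ → ℝ by f(x) = (1 − (τ²/4)|x|²)/(1 + (τ²/4)|x|²). Then |f(a) − f(b)| ≤ τ |a − b| for all a, b ∈ ℝ³. -/
/-!
Put `t = τ|x|/2`. Then `f x = (1 - t²)/(1 + t²) = cos (2 arctan t)`. Since `cos` and `arctan`
are 1-Lipschitz (the derivative of `arctan` is `1/(1 + t²) ≤ 1`) and `x ↦ τ|x|/2` is
`τ/2`-Lipschitz, `f` is `1 · 2 · τ/2 = τ`-Lipschitz.
-/

noncomputable section
open scoped BigOperators

namespace Real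

theorem abs_arctan_sub_arctan_le (x y : ℝ) : |arctan x - arctan y| ≤ |x - y| := by
  have hderiv (z : ℝ) : ‖deriv arctan z‖₊ ≤ 1 := by
    rw [← NNReal.coe_le_coe, coe_nnnorm, deriv_arctan, norm_div, norm_one, NNReal.coe_one]
    exact div_le_one_of_le₀ (by rw [norm_of_nonneg (by positivity)]; nlinarith [sq_nonneg z])
      (norm_nonneg _)
  simpa [dist_eq] using
    (lipschitzWith_of_nnnorm_deriv_le differentiable_arctan hderiv).dist_le_mul x y

theorem cos_two_mul_arctan (x : ℝ) : cos (2 * arctan x) = (1 - x ^ 2) / (1 + x ^ 2) := by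
  rw [cos_two_mul, cos_sq_arctan]
  field_simp
  ring

end Real

open Real in
theorem abs_one_sub_sq_div_one_add_sq_sub_le (s t : ℝ) :
    |(1 - s ^ 2) / (1 + s ^ 2) - (1 - t ^ 2) / (1 + t ^ 2)| ≤ 2 * |s - t| := by
  rw [← cos_two_mul_arctan, ← cos_two_mul_arctan]
  calc |cos (2 * arctan s) - cos (2 * arctan t)|
      ≤ |2 * arctan s - 2 * arctan t| := abs_cos_sub_cos_le _ _
    _ = 2 * |arctan s - arctan t| := by rw [← mul_sub, abs_mul, abs_two]
    _ ≤ 2 * |s - t| := mul_le_mul_of_nonneg_left (abs_arctan_sub_arctan_le s t) zero_le_two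

theorem enorm3_eq_norm (v : Fin 3 → ℝ) : enorm3 v = ‖WithLp.toLp 2 v‖ := by
  simp [EuclideanSpace.norm_eq, enorm3]

theorem sq3_eq_enorm3_sq (v : Fin 3 → ℝ) : sq3 v = enorm3 v ^ 2 :=
  (Real.sq_sqrt (Finset.sum_nonneg fun i _ => sq_nonneg (v i))).symm

theorem abs_enorm3_sub_enorm3_le (a b : Fin 3 → ℝ) :
    |enorm3 a - enorm3 b| ≤ enorm3 (a - b) := by
  simpa only [enorm3_eq_norm, WithLp.toLp_sub] using abs_norm_sub_norm_le _ _

/-- The scalar coefficient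
`f(x) = (1 − (τ²/4)|x|²)/(1 + (τ²/4)|x|²)` of the identity matrix in the
propagation matrix `V_τ` is Lipschitz with constant `τ`. -/
theorem scalar_coefficient_lipschitz
    (τ : ℝ) (hτ : 0 < τ)
    (f : (Fin 3 → ℝ) → ℝ)
    (hf : f = fun x => (1 - τ ^ 2 / 4 * sq3 x) / (1 + τ ^ 2 / 4 * sq3 x)) :
    ∀ a b : Fin 3 → ℝ, |f a - f b| ≤ τ * enorm3 (a - b) := by
  intro a b
  have hf' (x : Fin 3 → ℝ) :
      f x = (1 - (τ / 2 * enorm3 x) ^ 2) / (1 + (τ / 2 * enorm3 x) ^ 2) := by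
    simp only [hf, sq3_eq_enorm3_sq]; ring
  calc |f a - f b| ≤ 2 * |τ / 2 * enorm3 a - τ / 2 * enorm3 b| := by
        rw [hf', hf']; exact abs_one_sub_sq_div_one_add_sq_sub_le _ _
    _ = τ * |enorm3 a - enorm3 b| := by
        rw [← mul_sub, abs_mul, abs_of_pos (half_pos hτ)]; ring
    _ ≤ τ * enorm3 (a - b) := by gcongr; exact abs_enorm3_sub_enorm3_le a b
end
end

section
/- Let τ > 0, let d, w, u₁, u₂ ∈ ℝ³ with |d| ≤ 1, and set ū₁ = (w + u₁)/2 and ū₂ = (w + u₂)/2. Then | (d × ū₁)/(1 + (τ²/4)|ū₁|²) − (d × ū₂)/(1 + (τ²/4)|ū₂|²) | ≤ 2 |u₁ − u₂|. -/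
noncomputable section
open scoped BigOperators

/-!
Since `d × ·` is linear, the difference equals `d × (g ū₁ − g ū₂)` for
`g v = (1 + c|v|²)⁻¹ v`, `c = τ²/4`, and `|d × x| ≤ |d| |x|`. The map `g` is 2-Lipschitz in any
real normed space: splitting `g a − g b` as `α⁻¹ (a − b) + (α⁻¹ − β⁻¹) b`, the first term is at
most `|a − b|` because `α ≥ 1`, and so is the second, because `c |b| (|a| + |b|) ≤ α β`.
Finally `ū₁ − ū₂ = (u₁ − u₂)/2`.
-/

open WithLp

lemma enorm3_eq_norm_toLp (v : Fin 3 → ℝ) : enorm3 v = ‖toLp 2 v‖ := by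
  simp [enorm3, EuclideanSpace.norm_eq]

lemma sq3_eq_norm_toLp_sq (v : Fin 3 → ℝ) : sq3 v = ‖toLp 2 v‖ ^ 2 := by
  rw [← enorm3_eq_norm_toLp, enorm3, Real.sq_sqrt (by positivity), sq3]

lemma norm_toLp_crossProduct_le (a b : Fin 3 → ℝ) :
    ‖toLp 2 (crossProduct a b)‖ ≤ ‖toLp 2 a‖ * ‖toLp 2 b‖ := by
  rw [InnerProductGeometry.norm_toLp_symm_crossProduct]
  exact mul_le_of_le_one_right (by positivity) (Real.sin_le_one _)

lemma abs_inv_one_add_mul_sq_sub_mul_le {c x y : ℝ} (hc : 0 ≤ c) (hx : 0 ≤ x) (hy : 0 ≤ y) :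
    |(1 + c * x ^ 2)⁻¹ - (1 + c * y ^ 2)⁻¹| * y ≤ |x - y| := by
  have hα : 0 < 1 + c * x ^ 2 := by positivity
  have hβ : 0 < 1 + c * y ^ 2 := by positivity
  have hdiff : (1 + c * x ^ 2)⁻¹ - (1 + c * y ^ 2)⁻¹
      = (y - x) * (c * (x + y) / ((1 + c * x ^ 2) * (1 + c * y ^ 2))) := by
    field_simp
    ring
  rw [hdiff, abs_mul, abs_sub_comm y x,
    abs_of_nonneg (a := c * (x + y) / _) (by positivity), mul_assoc]
  refine mul_le_of_le_one_right (abs_nonneg _) ?_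
  rw [div_mul_eq_mul_div, div_le_one (by positivity)]
  nlinarith [sq_nonneg (c * x * y - 1), mul_nonneg hc (sq_nonneg x),
    mul_nonneg (mul_nonneg hc hx) hy]

lemma norm_inv_one_add_mul_norm_sq_smul_sub_le {E : Type*} [SeminormedAddCommGroup E]
    [NormedSpace ℝ E] {c : ℝ} (hc : 0 ≤ c) (a b : E) :
    ‖(1 + c * ‖a‖ ^ 2)⁻¹ • a - (1 + c * ‖b‖ ^ 2)⁻¹ • b‖ ≤ 2 * ‖a - b‖ := by
  set α := 1 + c * ‖a‖ ^ 2
  set β := 1 + c * ‖b‖ ^ 2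
  have hα : 1 ≤ α := le_add_of_nonneg_right (by positivity)
  calc ‖α⁻¹ • a - β⁻¹ • b‖ = ‖α⁻¹ • (a - b) + (α⁻¹ - β⁻¹) • b‖ := by congr 1; module
    _ ≤ α⁻¹ * ‖a - b‖ + |α⁻¹ - β⁻¹| * ‖b‖ := by
      refine (norm_add_le _ _).trans_eq ?_
      rw [norm_smul, norm_smul, Real.norm_eq_abs, Real.norm_eq_abs, abs_of_pos (by positivity)]
    _ ≤ ‖a - b‖ + |‖a‖ - ‖b‖| :=
      add_le_add (mul_le_of_le_one_left (norm_nonneg _) (inv_le_one_of_one_le₀ hα))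
        (abs_inv_one_add_mul_sq_sub_mul_le hc (norm_nonneg a) (norm_nonneg b))
    _ ≤ 2 * ‖a - b‖ := by linarith [abs_norm_sub_norm_le a b]

theorem skew_part_lipschitz_general
    (τ : ℝ) (d w u₁ u₂ : Fin 3 → ℝ) (hd : enorm3 d ≤ 1)
    (ub₁ ub₂ : Fin 3 → ℝ)
    (hub₁ : ub₁ = (2 : ℝ)⁻¹ • (w + u₁)) (hub₂ : ub₂ = (2 : ℝ)⁻¹ • (w + u₂)) :
    enorm3 ((1 + τ ^ 2 / 4 * sq3 ub₁)⁻¹ • crossProduct d ub₁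
        - (1 + τ ^ 2 / 4 * sq3 ub₂)⁻¹ • crossProduct d ub₂)
      ≤ 2 * enorm3 (u₁ - u₂) := by
  set g : (Fin 3 → ℝ) → Fin 3 → ℝ := fun v => (1 + τ ^ 2 / 4 * sq3 v)⁻¹ • v
  have hcross : (1 + τ ^ 2 / 4 * sq3 ub₁)⁻¹ • crossProduct d ub₁
      - (1 + τ ^ 2 / 4 * sq3 ub₂)⁻¹ • crossProduct d ub₂ = crossProduct d (g ub₁ - g ub₂) := by
    simp only [g, map_sub, map_smul]
  have hg : ‖toLp 2 (g ub₁ - g ub₂)‖ ≤ 2 * ‖toLp 2 (ub₁ - ub₂)‖ := by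
    simp only [g, toLp_sub, toLp_smul, sq3_eq_norm_toLp_sq]
    exact norm_inv_one_add_mul_norm_sq_smul_sub_le (by positivity) _ _
  have hmid : ub₁ - ub₂ = (2 : ℝ)⁻¹ • (u₁ - u₂) := by rw [hub₁, hub₂]; module
  rw [hcross]
  simp only [enorm3_eq_norm_toLp] at hd ⊢
  calc ‖toLp 2 (crossProduct d (g ub₁ - g ub₂))‖
      ≤ ‖toLp 2 d‖ * ‖toLp 2 (g ub₁ - g ub₂)‖ := norm_toLp_crossProduct_le _ _
    _ ≤ 1 * (2 * ‖toLp 2 (ub₁ - ub₂)‖) := by gcongr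
    _ = ‖toLp 2 (u₁ - u₂)‖ := by rw [hmid, toLp_smul, norm_smul]; norm_num; ring
    _ ≤ 2 * ‖toLp 2 (u₁ - u₂)‖ := by linarith [norm_nonneg (toLp 2 (u₁ - u₂))]

/-- Lipschitz bound for the skew part of the propagation
matrix: with `ū_j = (w + u_j)/2` and `|d| ≤ 1`,
`|(d × ū₁)/(1 + (τ²/4)|ū₁|²) − (d × ū₂)/(1 + (τ²/4)|ū₂|²)| ≤ 2|u₁ − u₂|`. -/
theorem skew_part_lipschitz
    (τ : ℝ) (hτ : 0 < τ) (d w u₁ u₂ : Fin 3 → ℝ) (hd : enorm3 d ≤ 1)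
    (ub₁ ub₂ : Fin 3 → ℝ)
    (hub₁ : ub₁ = (2 : ℝ)⁻¹ • (w + u₁)) (hub₂ : ub₂ = (2 : ℝ)⁻¹ • (w + u₂)) :
    enorm3 ((1 + τ ^ 2 / 4 * sq3 ub₁)⁻¹ • crossProduct d ub₁
        - (1 + τ ^ 2 / 4 * sq3 ub₂)⁻¹ • crossProduct d ub₂)
      ≤ 2 * enorm3 (u₁ - u₂) :=
  skew_part_lipschitz_general τ d w u₁ u₂ hd ub₁ ub₂ hub₁ hub₂
end
end

section
/- There exists an absolute constant C > 0 such that for every τ > 0, all a, b ∈ ℝ³, and every v ∈ ℝ³ with |v| ≤ 1, one has |V_τ(a) v − V_τ(b) v| ≤ C τ |a − b|. -/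
noncomputable section
open scoped BigOperators

/-!
`V_τ(w)` is the Cayley transform `(I - (τ/2) Q(w))⁻¹ (I + (τ/2) Q(w))`, i.e. `u = V_τ(w) v` solves
`u - v = (τ/2) (u + v) × w`. Dotting with `u + v` shows `|u| = |v|`. Subtracting the equations
for `u_a = V_τ(a) v` and `u_b = V_τ(b) v` gives, for `d = u_a - u_b`,
`d - (τ/2) d × a = (τ/2) (u_b + v) × (a - b)`. Since `d ⊥ d × a`, the left side has norm at
least `|d|`, and the right side has norm at most `(τ/2) · 2|v| · |a - b|`; so `C = 1` works.
-/

open Matrix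

lemma sq3_eq_dotProduct (v : Fin 3 → ℝ) : sq3 v = v ⬝ᵥ v := by
  simp [sq3, dotProduct, sq]

lemma sq3_nonneg (v : Fin 3 → ℝ) : 0 ≤ sq3 v := by
  unfold sq3; positivity

lemma sq3_smul (c : ℝ) (x : Fin 3 → ℝ) : sq3 (c • x) = c ^ 2 * sq3 x := by
  simp only [sq3_eq_dotProduct, dotProduct_smul, smul_dotProduct, smul_eq_mul]
  ring

lemma sq3_add_le (x y : Fin 3 → ℝ) : sq3 (x + y) ≤ 2 * sq3 x + 2 * sq3 y := by
  have := sq3_nonneg (x - y)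
  simp only [sq3_eq_dotProduct, dotProduct_add, add_dotProduct, dotProduct_sub, sub_dotProduct,
    dotProduct_comm y x] at *
  linarith

lemma sq3_cross_le (x y : Fin 3 → ℝ) : sq3 (x ⨯₃ y) ≤ sq3 x * sq3 y := by
  simp only [sq3_eq_dotProduct, cross_dot_cross, dotProduct_comm y x]
  nlinarith [sq_nonneg (x ⬝ᵥ y)]

lemma sq3_le_sq3_sub_smul_cross (t : ℝ) (d a : Fin 3 → ℝ) :
    sq3 d ≤ sq3 (d - t • (d ⨯₃ a)) := by
  have := sq3_nonneg (d ⨯₃ a)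
  simp only [sq3_eq_dotProduct, dotProduct_sub, sub_dotProduct, dotProduct_smul, smul_dotProduct,
    dot_self_cross, dotProduct_comm (d ⨯₃ a) d, smul_eq_mul] at *
  nlinarith [sq_nonneg t]

lemma sub_sub_smul_cross_eq {t : ℝ} {x y v a b : Fin 3 → ℝ}
    (hx : x - v = t • ((x + v) ⨯₃ a)) (hy : y - v = t • ((y + v) ⨯₃ b)) :
    (x - y) - t • ((x - y) ⨯₃ a) = t • ((y + v) ⨯₃ (a - b)) := by
  simp only [map_add, map_sub, LinearMap.add_apply, LinearMap.sub_apply] at *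
  linear_combination (norm := module) hx - hy

lemma Vmat_sub_self (τ : ℝ) (w v : Fin 3 → ℝ) :
    Vmat τ w v - v = (τ / 2) • ((Vmat τ w v + v) ⨯₃ w) := by
  have hden : 1 + τ ^ 2 / 4 * (w 0 ^ 2 + w 1 ^ 2 + w 2 ^ 2) ≠ 0 := by positivity
  ext i
  fin_cases i <;>
    simp [Vmat, sq3, cross_apply, Fin.sum_univ_three, vecHead, vecTail] <;> field_simp <;> ring

lemma sq3_Vmat (τ : ℝ) (w v : Fin 3 → ℝ) : sq3 (Vmat τ w v) = sq3 v := by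
  have h := congrArg ((Vmat τ w v + v) ⬝ᵥ ·) (Vmat_sub_self τ w v)
  rw [dotProduct_smul, dot_self_cross, smul_zero] at h
  simp only [dotProduct_sub, add_dotProduct, dotProduct_comm v (Vmat τ w v)] at h
  rw [sq3_eq_dotProduct, sq3_eq_dotProduct]
  linarith

lemma sq3_Vmat_sub_le (τ : ℝ) (a b v : Fin 3 → ℝ) :
    sq3 (Vmat τ a v - Vmat τ b v) ≤ τ ^ 2 * sq3 v * sq3 (a - b) := by
  set d := Vmat τ a v - Vmat τ b v
  have hd := sub_sub_smul_cross_eq (Vmat_sub_self τ a v) (Vmat_sub_self τ b v)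
  have hsum : sq3 (Vmat τ b v + v) ≤ 4 * sq3 v := by
    have := sq3_add_le (Vmat τ b v) v
    rw [sq3_Vmat] at this
    linarith
  calc sq3 d ≤ sq3 (d - (τ / 2) • (d ⨯₃ a)) := sq3_le_sq3_sub_smul_cross _ _ _
    _ = (τ / 2) ^ 2 * sq3 ((Vmat τ b v + v) ⨯₃ (a - b)) := by rw [hd, sq3_smul]
    _ ≤ (τ / 2) ^ 2 * (sq3 (Vmat τ b v + v) * sq3 (a - b)) := by gcongr; exact sq3_cross_le _ _
    _ ≤ (τ / 2) ^ 2 * (4 * sq3 v * sq3 (a - b)) := by gcongr; exact sq3_nonneg _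
    _ = τ ^ 2 * sq3 v * sq3 (a - b) := by ring

lemma enorm3_Vmat_sub_le (τ : ℝ) (a b v : Fin 3 → ℝ) :
    enorm3 (Vmat τ a v - Vmat τ b v) ≤ |τ| * enorm3 v * enorm3 (a - b) := by
  calc √(sq3 (Vmat τ a v - Vmat τ b v)) ≤ √(τ ^ 2 * sq3 v * sq3 (a - b)) :=
        Real.sqrt_le_sqrt (sq3_Vmat_sub_le τ a b v)
    _ = |τ| * √(sq3 v) * √(sq3 (a - b)) := by
        rw [Real.sqrt_mul (by have := sq3_nonneg v; positivity), Real.sqrt_mul (sq_nonneg τ),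
          Real.sqrt_sq_eq_abs]

/-- There is an absolute constant `C > 0` such that for all
`τ > 0`, `a, b ∈ ℝ³`, and `|v| ≤ 1`, `|V_τ(a)v − V_τ(b)v| ≤ C τ |a − b|`. -/
theorem Vmat_lipschitz_in_w :
    ∃ C > (0 : ℝ), ∀ τ : ℝ, 0 < τ → ∀ a b v : Fin 3 → ℝ, enorm3 v ≤ 1 →
      enorm3 (Vmat τ a v - Vmat τ b v) ≤ C * τ * enorm3 (a - b) := by
  refine ⟨1, one_pos, fun τ hτ a b v hv => ?_⟩
  calc enorm3 (Vmat τ a v - Vmat τ b v) ≤ τ * enorm3 v * enorm3 (a - b) := by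
        simpa only [abs_of_pos hτ] using enorm3_Vmat_sub_le τ a b v
    _ ≤ 1 * τ * enorm3 (a - b) := by
        rw [one_mul]
        exact mul_le_mul_of_nonneg_right (mul_le_of_le_one_right hτ.le hv) (Real.sqrt_nonneg _)
end
end

section
/- There exists κ > 0 with the following property. For every M ≥ 1 with h = 1/M, every time step 0 < Δt ≤ κ h, and all grid functions dᵐ, wᵐ : (ℤ/Mℤ)³ → ℝ³ with |dᵐ_i| = 1 for all i, there exists a unique pair of grid functions (dᵐ⁺¹, wᵐ⁺¹) satisfying, at every grid point i, (dᵐ⁺¹_i − dᵐ_i)/Δt = d^{m+1/2}_i × w^{m+1/2}_i and (wᵐ⁺¹_i − wᵐ_i)/Δt = (Δ_h d^{m+1/2})_i × d^{m+1/2}_i, where d^{m+1/2} = (dᵐ + dᵐ⁺¹)/2 and w^{m+1/2} = (wᵐ + wᵐ⁺¹)/2. -/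
/-!
Write `a = (dᵐ + dᵐ⁺¹)/2`. The second equation gives `wᵐ⁺¹` explicitly in terms of `a`, and
substituting it into the first leaves `a - a × (Δt/2) wᵐ = dᵐ + (Δt²/4) a × (Δ_h a × a)`. The map
`x ↦ x - x × c` is invertible with an inverse bounded independently of `c` (since `x × c ⊥ x`), so
`a` is a fixed point of a map which, because `‖Δ_h‖ ≤ 12/h²` and `Δt ≤ κh`, sends a ball of
radius 3 into itself and contracts there. Banach's theorem gives existence; uniqueness holds since
the scheme preserves `|dᵢ| = 1` (the increment `dᵐ⁺¹ - dᵐ` is orthogonal to `a`), so the midpoint of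
any solution lies in that ball.
-/

noncomputable section
open scoped BigOperators

open Matrix Set Metric

lemma sq_norm_le_dotProduct_self {ι : Type*} [Fintype ι] (x : ι → ℝ) : ‖x‖ ^ 2 ≤ x ⬝ᵥ x := by
  have hsum : x ⬝ᵥ x = ∑ i, ‖x i‖ ^ 2 := by simp [dotProduct, sq]
  refine (Real.le_sqrt (norm_nonneg x) (by rw [hsum]; positivity)).1 <|
    (pi_norm_le_iff_of_nonneg (Real.sqrt_nonneg _)).2 fun i => Real.le_sqrt_of_sq_le ?_
  rw [hsum]
  exact Finset.single_le_sum (f := fun i => ‖x i‖ ^ 2) (fun i _ => by positivity)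
    (Finset.mem_univ i)

lemma dotProduct_self_le {ι : Type*} [Fintype ι] (x : ι → ℝ) :
    x ⬝ᵥ x ≤ Fintype.card ι * ‖x‖ ^ 2 :=
  calc x ⬝ᵥ x = ∑ i, ‖x i‖ ^ 2 := by simp [dotProduct, sq]
  _ ≤ ∑ _i : ι, ‖x‖ ^ 2 := by gcongr with i; exact norm_le_pi_norm x i
  _ = Fintype.card ι * ‖x‖ ^ 2 := by simp

lemma norm_le_one_of_dotProduct_self_eq_one {ι : Type*} [Fintype ι] {x : ι → ℝ}
    (hx : x ⬝ᵥ x = 1) : ‖x‖ ≤ 1 := by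
  have := sq_norm_le_dotProduct_self x
  nlinarith [norm_nonneg x]

lemma norm_cross_le (u v : Fin 3 → ℝ) : ‖u ⨯₃ v‖ ≤ 2 * ‖u‖ * ‖v‖ := by
  have key (a b c d : Fin 3) : ‖u a * v b - u c * v d‖ ≤ 2 * ‖u‖ * ‖v‖ :=
    calc ‖u a * v b - u c * v d‖ ≤ ‖u a‖ * ‖v b‖ + ‖u c‖ * ‖v d‖ := by
          grw [norm_sub_le, norm_mul, norm_mul]
    _ ≤ ‖u‖ * ‖v‖ + ‖u‖ * ‖v‖ := by
          gcongr <;> first | exact norm_le_pi_norm u _ | exact norm_le_pi_norm v _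
    _ = 2 * ‖u‖ * ‖v‖ := by ring
  refine (pi_norm_le_iff_of_nonneg (by positivity)).2 fun k => ?_
  fin_cases k <;> simp only [cross_apply] <;> apply key

lemma norm_cross_cross_le (u v w : Fin 3 → ℝ) : ‖u ⨯₃ (v ⨯₃ w)‖ ≤ 4 * ‖u‖ * ‖v‖ * ‖w‖ :=
  calc ‖u ⨯₃ (v ⨯₃ w)‖ ≤ 2 * ‖u‖ * (2 * ‖v‖ * ‖w‖) := by grw [norm_cross_le, norm_cross_le]
  _ = 4 * ‖u‖ * ‖v‖ * ‖w‖ := by ring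

lemma dotProduct_self_le_sub_cross (x c : Fin 3 → ℝ) :
    x ⬝ᵥ x ≤ (x - x ⨯₃ c) ⬝ᵥ (x - x ⨯₃ c) := by
  have hx : x ⬝ᵥ x ⨯₃ c = 0 := dot_self_cross x c
  have hx' : x ⨯₃ c ⬝ᵥ x = 0 := by rw [dotProduct_comm, hx]
  simp only [sub_dotProduct, dotProduct_sub, hx, hx', sub_zero, zero_sub, sub_neg_eq_add,
    le_add_iff_nonneg_right]
  exact dotProduct_self_star_nonneg _

def subCross (c : Fin 3 → ℝ) : (Fin 3 → ℝ) ≃ₗ[ℝ] (Fin 3 → ℝ) :=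
  .ofInjectiveEndo (LinearMap.id - crossProduct.flip c) <| by
    refine (injective_iff_map_eq_zero _).2 fun x hx => dotProduct_self_eq_zero.1 ?_
    refine le_antisymm ?_ (dotProduct_self_star_nonneg x)
    have hx : x - x ⨯₃ c = 0 := hx
    simpa [hx] using dotProduct_self_le_sub_cross x c

@[simp]
lemma subCross_apply (c x : Fin 3 → ℝ) : subCross c x = x - x ⨯₃ c := rfl

lemma norm_subCross_symm_le (c y : Fin 3 → ℝ) : ‖(subCross c).symm y‖ ≤ 2 * ‖y‖ := by
  set x := (subCross c).symm y
  have hy : y = x - x ⨯₃ c := by rw [← subCross_apply, LinearEquiv.apply_symm_apply]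
  have : ‖x‖ ^ 2 ≤ (2 * ‖y‖) ^ 2 :=
    calc ‖x‖ ^ 2 ≤ x ⬝ᵥ x := sq_norm_le_dotProduct_self x
    _ ≤ y ⬝ᵥ y := hy ▸ dotProduct_self_le_sub_cross x c
    _ ≤ 3 * ‖y‖ ^ 2 := by simpa using dotProduct_self_le y
    _ ≤ (2 * ‖y‖) ^ 2 := by nlinarith [sq_nonneg ‖y‖]
  exact (pow_le_pow_iff_left₀ (norm_nonneg _) (by positivity) two_ne_zero).1 this

lemma inv_smul_sub_eq_iff_eq_add {K V : Type*} [Field K] [AddCommGroup V] [Module K V] {t : K}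
    (ht : t ≠ 0) (x y z : V) : t⁻¹ • (x - y) = z ↔ x = y + t • z := by
  rw [inv_smul_eq_iff₀ ht, sub_eq_iff_eq_add']

lemma midpoint_step_iff {Δt : ℝ} (hΔt : Δt ≠ 0) (d d' w w' g : Fin 3 → ℝ) :
    (Δt⁻¹ • (d' - d) = ((2 : ℝ)⁻¹ • (d + d')) ⨯₃ ((2 : ℝ)⁻¹ • (w + w'))
      ∧ Δt⁻¹ • (w' - w) = g ⨯₃ ((2 : ℝ)⁻¹ • (d + d'))) ↔
    ((subCross ((Δt / 2) • w)).symm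
        (d + (Δt ^ 2 / 4) • ((2 : ℝ)⁻¹ • (d + d')) ⨯₃ (g ⨯₃ ((2 : ℝ)⁻¹ • (d + d'))))
        = (2 : ℝ)⁻¹ • (d + d')
      ∧ w' = w + Δt • g ⨯₃ ((2 : ℝ)⁻¹ • (d + d'))) := by
  obtain ⟨m, rfl⟩ : ∃ m, d' = (2 : ℝ) • m - d := ⟨(2 : ℝ)⁻¹ • (d + d'), by module⟩
  have hm : (2 : ℝ)⁻¹ • (d + ((2 : ℝ) • m - d)) = m := by module
  rw [hm, inv_smul_sub_eq_iff_eq_add hΔt w', inv_smul_eq_iff₀ hΔt, LinearEquiv.symm_apply_eq,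
    eq_comm (a := d + _)]
  constructor <;> rintro ⟨h, rfl⟩ <;> refine ⟨?_, rfl⟩ <;>
    simp only [subCross_apply, map_add, map_smul] at h ⊢
  · linear_combination (norm := module) (2 : ℝ)⁻¹ • h
  · linear_combination (norm := module) (2 : ℝ) • h

lemma dotProduct_self_eq_of_sub_eq_midpoint_cross_s15 {Δt : ℝ} (hΔt : Δt ≠ 0) {d d' v : Fin 3 → ℝ}
    (h : Δt⁻¹ • (d' - d) = ((2 : ℝ)⁻¹ • (d + d')) ⨯₃ v) : d' ⬝ᵥ d' = d ⬝ᵥ d := by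
  rw [inv_smul_eq_iff₀ hΔt] at h
  have horth : (d' - d) ⬝ᵥ ((2 : ℝ)⁻¹ • (d + d')) = 0 := by
    rw [h, smul_dotProduct, dotProduct_comm, dot_self_cross, smul_zero]
  simp only [dotProduct_smul, sub_dotProduct, dotProduct_add, smul_eq_mul, mul_eq_zero,
    inv_eq_zero, two_ne_zero, false_or, dotProduct_comm d' d] at horth
  linarith

lemma existsUnique_fixedPt_of_lipschitzOnWith {α : Type*} [MetricSpace α] [CompleteSpace α]
    {f : α → α} {s : Set α} {K : NNReal} (hK : K < 1) (hs : IsClosed s) (hne : s.Nonempty)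
    (hmaps : MapsTo f s s) (hf : LipschitzOnWith K f s) : ∃! x, x ∈ s ∧ f x = x := by
  have : CompleteSpace s := hs.completeSpace_coe
  have : Nonempty s := hne.to_subtype
  have hc : ContractingWith K (hmaps.restrict f s s) := ⟨hK, hf.mapsToRestrict hmaps⟩
  refine ⟨hc.fixedPoint, ⟨Subtype.prop _, congrArg Subtype.val hc.fixedPoint_isFixedPt⟩, ?_⟩
  rintro y ⟨hy, hfy⟩
  exact congrArg Subtype.val
    (hc.fixedPoint_unique' (x := ⟨y, hy⟩) (Subtype.ext hfy) hc.fixedPoint_isFixedPt)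

section Scheme

variable {ι : Type*} [Fintype ι] (L : (ι → Fin 3 → ℝ) →L[ℝ] (ι → Fin 3 → ℝ))

def cubicTerm (a : ι → Fin 3 → ℝ) (i : ι) : Fin 3 → ℝ := a i ⨯₃ (L a i ⨯₃ a i)

lemma norm_cubicTerm_le (a : ι → Fin 3 → ℝ) : ‖cubicTerm L a‖ ≤ 4 * ‖L‖ * ‖a‖ ^ 3 := by
  refine (pi_norm_le_iff_of_nonneg (by positivity)).2 fun i => ?_
  have hLa : ‖L a i‖ ≤ ‖L‖ * ‖a‖ := (norm_le_pi_norm _ i).trans (L.le_opNorm a)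
  calc ‖cubicTerm L a i‖ ≤ 4 * ‖a i‖ * ‖L a i‖ * ‖a i‖ := norm_cross_cross_le _ _ _
  _ ≤ 4 * ‖a‖ * (‖L‖ * ‖a‖) * ‖a‖ := by gcongr <;> exact norm_le_pi_norm a i
  _ = 4 * ‖L‖ * ‖a‖ ^ 3 := by ring

lemma norm_cubicTerm_sub_le {a b : ι → Fin 3 → ℝ} {R : ℝ} (ha : ‖a‖ ≤ R) (hb : ‖b‖ ≤ R) :
    ‖cubicTerm L a - cubicTerm L b‖ ≤ 12 * ‖L‖ * R ^ 2 * ‖a - b‖ := by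
  have hR : 0 ≤ R := (norm_nonneg a).trans ha
  refine (pi_norm_le_iff_of_nonneg (by positivity)).2 fun i => ?_
  have hai : ‖a i‖ ≤ R := (norm_le_pi_norm a i).trans ha
  have hbi : ‖b i‖ ≤ R := (norm_le_pi_norm b i).trans hb
  have habi : ‖a i - b i‖ ≤ ‖a - b‖ := norm_le_pi_norm (a - b) i
  have hLa : ‖L a i‖ ≤ ‖L‖ * R := (norm_le_pi_norm _ i).trans (L.le_opNorm_of_le ha)
  have hLb : ‖L b i‖ ≤ ‖L‖ * R := (norm_le_pi_norm _ i).trans (L.le_opNorm_of_le hb)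
  have hLab : ‖L a i - L b i‖ ≤ ‖L‖ * ‖a - b‖ := by
    simpa [map_sub] using (norm_le_pi_norm (L (a - b)) i).trans (L.le_opNorm (a - b))
  have split : cubicTerm L a i - cubicTerm L b i = (a i - b i) ⨯₃ (L a i ⨯₃ a i)
      + b i ⨯₃ ((L a i - L b i) ⨯₃ a i) + b i ⨯₃ (L b i ⨯₃ (a i - b i)) := by
    simp only [cubicTerm, map_sub, LinearMap.sub_apply]
    abel
  rw [Pi.sub_apply, split]
  grw [norm_add₃_le, norm_cross_cross_le, norm_cross_cross_le, norm_cross_cross_le, hai, hbi, hLa,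
    hLb, hLab, habi]
  exact le_of_eq (by ring)


/-- Its fixed points are the midpoints `(dᵐ + dᵐ⁺¹)/2` of the solutions of the scheme. -/
def midpointMap (Δt : ℝ) (d w a : ι → Fin 3 → ℝ) (i : ι) : Fin 3 → ℝ :=
  (subCross ((Δt / 2) • w i)).symm (d i + (Δt ^ 2 / 4) • cubicTerm L a i)

variable {L} {Δt : ℝ}

lemma mapsTo_midpointMap {d : ι → Fin 3 → ℝ} (w : ι → Fin 3 → ℝ)
    (hsmall : Δt ^ 2 * ‖L‖ ≤ 1 / 108) (hd : ‖d‖ ≤ 1) :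
    MapsTo (midpointMap L Δt d w) (closedBall 0 3) (closedBall 0 3) := by
  intro a ha
  rw [mem_closedBall_zero_iff] at ha ⊢
  refine (pi_norm_le_iff_of_nonneg (by norm_num)).2 fun i => ?_
  have hcubic : ‖cubicTerm L a i‖ ≤ 4 * ‖L‖ * 3 ^ 3 :=
    (norm_le_pi_norm _ i).trans ((norm_cubicTerm_le L a).trans (by gcongr))
  calc ‖midpointMap L Δt d w a i‖ ≤ 2 * ‖d i + (Δt ^ 2 / 4) • cubicTerm L a i‖ :=
        norm_subCross_symm_le _ _
  _ ≤ 2 * (‖d‖ + Δt ^ 2 / 4 * (4 * ‖L‖ * 3 ^ 3)) := by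
        grw [norm_add_le, norm_smul, Real.norm_of_nonneg (by positivity), norm_le_pi_norm d i,
          hcubic]
  _ ≤ 3 := by nlinarith

lemma lipschitzOnWith_midpointMap (d w : ι → Fin 3 → ℝ) (hsmall : Δt ^ 2 * ‖L‖ ≤ 1 / 108) :
    LipschitzOnWith (1 / 2) (midpointMap L Δt d w) (closedBall 0 3) := by
  refine LipschitzOnWith.of_dist_le_mul fun a ha b hb => ?_
  rw [mem_closedBall_zero_iff] at ha hb
  rw [dist_eq_norm, dist_eq_norm]
  refine (pi_norm_le_iff_of_nonneg (by positivity)).2 fun i => ?_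
  have hcubic : ‖cubicTerm L a i - cubicTerm L b i‖ ≤ 12 * ‖L‖ * 3 ^ 2 * ‖a - b‖ :=
    (norm_le_pi_norm (cubicTerm L a - cubicTerm L b) i).trans (norm_cubicTerm_sub_le L ha hb)
  calc ‖midpointMap L Δt d w a i - midpointMap L Δt d w b i‖
      = ‖(subCross ((Δt / 2) • w i)).symm
          ((Δt ^ 2 / 4) • (cubicTerm L a i - cubicTerm L b i))‖ := by
        rw [midpointMap, midpointMap, ← map_sub, add_sub_add_left_eq_sub, smul_sub]
  _ ≤ 2 * (Δt ^ 2 / 4 * (12 * ‖L‖ * 3 ^ 2 * ‖a - b‖)) := by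
        grw [norm_subCross_symm_le, norm_smul, Real.norm_of_nonneg (by positivity), hcubic]
  _ ≤ (1 / 2 : NNReal) * ‖a - b‖ := by
        push_cast; nlinarith [norm_nonneg (a - b)]

theorem existsUnique_midpoint_step (hΔt : Δt ≠ 0) (hsmall : Δt ^ 2 * ‖L‖ ≤ 1 / 108)
    (d w : ι → Fin 3 → ℝ) (hd : ∀ i, d i ⬝ᵥ d i = 1) :
    ∃! p : (ι → Fin 3 → ℝ) × (ι → Fin 3 → ℝ), ∀ i,
      Δt⁻¹ • (p.1 i - d i) = ((2 : ℝ)⁻¹ • (d i + p.1 i)) ⨯₃ ((2 : ℝ)⁻¹ • (w i + p.2 i))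
        ∧ Δt⁻¹ • (p.2 i - w i)
          = L (fun j => (2 : ℝ)⁻¹ • (d j + p.1 j)) i ⨯₃ ((2 : ℝ)⁻¹ • (d i + p.1 i)) := by
  set mid : (ι → Fin 3 → ℝ) → ι → Fin 3 → ℝ := fun d' j => (2 : ℝ)⁻¹ • (d j + d' j)
  have step_iff (p : (ι → Fin 3 → ℝ) × (ι → Fin 3 → ℝ)) :
      (∀ i, Δt⁻¹ • (p.1 i - d i) = ((2 : ℝ)⁻¹ • (d i + p.1 i)) ⨯₃ ((2 : ℝ)⁻¹ • (w i + p.2 i))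
        ∧ Δt⁻¹ • (p.2 i - w i) = L (mid p.1) i ⨯₃ mid p.1 i) ↔
      midpointMap L Δt d w (mid p.1) = mid p.1
        ∧ p.2 = fun i => w i + Δt • L (mid p.1) i ⨯₃ mid p.1 i := by
    rw [funext_iff, funext_iff, ← forall_and]
    exact forall_congr' fun i => midpoint_step_iff hΔt (d i) (p.1 i) (w i) (p.2 i) (L (mid p.1) i)
  have mem_ball (p : (ι → Fin 3 → ℝ) × (ι → Fin 3 → ℝ))
      (hp : ∀ i, Δt⁻¹ • (p.1 i - d i)
        = ((2 : ℝ)⁻¹ • (d i + p.1 i)) ⨯₃ ((2 : ℝ)⁻¹ • (w i + p.2 i))) :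
      mid p.1 ∈ closedBall 0 3 := by
    refine mem_closedBall_zero_iff.2 <| (pi_norm_le_iff_of_nonneg (by norm_num)).2 fun i => ?_
    have hdi := norm_le_one_of_dotProduct_self_eq_one (hd i)
    have hpi := norm_le_one_of_dotProduct_self_eq_one <|
      (dotProduct_self_eq_of_sub_eq_midpoint_cross_s15 hΔt (hp i)).trans (hd i)
    calc ‖mid p.1 i‖ ≤ 2⁻¹ * (‖d i‖ + ‖p.1 i‖) := by
          grw [norm_smul, norm_add_le, Real.norm_of_nonneg (by norm_num)]
    _ ≤ 3 := by linarith
  have hd1 : ‖d‖ ≤ 1 := (pi_norm_le_iff_of_nonneg zero_le_one).2 fun i =>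
    norm_le_one_of_dotProduct_self_eq_one (hd i)
  obtain ⟨a, ⟨-, ha⟩, huniq⟩ := existsUnique_fixedPt_of_lipschitzOnWith (by norm_num)
    isClosed_closedBall (nonempty_closedBall.2 (by norm_num)) (mapsTo_midpointMap w hsmall hd1)
    (lipschitzOnWith_midpointMap d w hsmall)
  have hmid : mid ((2 : ℝ) • a - d) = a := by
    ext i : 1
    simp only [mid, Pi.sub_apply, Pi.smul_apply]
    module
  refine ⟨((2 : ℝ) • a - d, fun i => w i + Δt • L a i ⨯₃ a i), (step_iff _).2 ?_, fun p hp => ?_⟩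
  · rw [hmid]; exact ⟨ha, rfl⟩
  obtain ⟨hfix, hp2⟩ := (step_iff p).1 hp
  have hpa : mid p.1 = a := huniq _ ⟨mem_ball p fun i => (hp i).1, hfix⟩
  have hp1 : p.1 = (2 : ℝ) • a - d := by
    rw [← hpa]
    ext i : 1
    simp only [mid, Pi.sub_apply, Pi.smul_apply]
    module
  exact Prod.ext hp1 (by rw [hp2, hpa])

end Scheme

section Grid

variable {M : ℕ} [NeZero M] (h : ℝ) (u : (Fin 3 → ZMod M) → Fin 3 → ℝ) (j : Fin 3)

lemma norm_Dp_le : ‖Dp h u j‖ ≤ 2 * |h⁻¹| * ‖u‖ := by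
  refine (pi_norm_le_iff_of_nonneg (by positivity)).2 fun i => ?_
  calc ‖Dp h u j i‖ ≤ |h⁻¹| * (‖u‖ + ‖u‖) := by
        rw [Dp, norm_smul, Real.norm_eq_abs]
        grw [norm_sub_le, norm_le_pi_norm u, norm_le_pi_norm u i]
  _ = 2 * |h⁻¹| * ‖u‖ := by ring

lemma norm_Dm_le : ‖Dm h u j‖ ≤ 2 * |h⁻¹| * ‖u‖ := by
  refine (pi_norm_le_iff_of_nonneg (by positivity)).2 fun i => ?_
  calc ‖Dm h u j i‖ ≤ |h⁻¹| * (‖u‖ + ‖u‖) := by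
        rw [Dm, norm_smul, Real.norm_eq_abs]
        grw [norm_sub_le, norm_le_pi_norm u, norm_le_pi_norm u (i - _)]
  _ = 2 * |h⁻¹| * ‖u‖ := by ring

lemma norm_lapl_le : ‖lapl h u‖ ≤ 12 * h⁻¹ ^ 2 * ‖u‖ := by
  have hsum : lapl h u = ∑ j, Dp h (Dm h u j) j := by ext i; simp [lapl]
  calc ‖lapl h u‖ ≤ ∑ j : Fin 3, 2 * |h⁻¹| * (2 * |h⁻¹| * ‖u‖) := by
        rw [hsum]
        grw [norm_sum_le]
        gcongr with j
        grw [norm_Dp_le, norm_Dm_le]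
  _ = 12 * |h⁻¹| ^ 2 * ‖u‖ := by
        rw [Finset.sum_const, Finset.card_univ, Fintype.card_fin, nsmul_eq_mul]; push_cast; ring
  _ = 12 * h⁻¹ ^ 2 * ‖u‖ := by rw [sq_abs]

variable (M) in
def laplCLM : ((Fin 3 → ZMod M) → Fin 3 → ℝ) →L[ℝ] ((Fin 3 → ZMod M) → Fin 3 → ℝ) :=
  LinearMap.mkContinuous
    { toFun := lapl h
      map_add' := fun u v => by
        ext i : 1
        simp only [lapl, Dp, Dm, Pi.add_apply, ← Finset.sum_add_distrib]
        congr 1; ext j : 1; module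
      map_smul' := fun c u => by
        ext i : 1
        simp only [lapl, Dp, Dm, Pi.smul_apply, Finset.smul_sum, RingHom.id_apply]
        congr 1; ext j : 1; module }
    (12 * h⁻¹ ^ 2) (norm_lapl_le h)

lemma norm_laplCLM_le : ‖laplCLM M h‖ ≤ 12 * h⁻¹ ^ 2 :=
  LinearMap.mkContinuous_norm_le _ (by positivity) _

end Grid

/-- There is `κ > 0` such that for every grid, every
`0 < Δt ≤ κh`, and all grid data `dᵐ` (of unit length) and `wᵐ`, the angular
momentum scheme has a unique solution `(dᵐ⁺¹, wᵐ⁺¹)`. -/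
theorem scheme_unique_solvability :
    ∃ κ > (0 : ℝ), ∀ (M : ℕ) [NeZero M], ∀ h Δt : ℝ, h = 1 / M → 0 < Δt →
      Δt ≤ κ * h →
      ∀ dm wm : (Fin 3 → ZMod M) → Fin 3 → ℝ, (∀ i, enorm3 (dm i) = 1) →
      ∃! p : ((Fin 3 → ZMod M) → Fin 3 → ℝ) × ((Fin 3 → ZMod M) → Fin 3 → ℝ),
        ∀ i, Δt⁻¹ • (p.1 i - dm i)
            = crossProduct ((2 : ℝ)⁻¹ • (dm i + p.1 i)) ((2 : ℝ)⁻¹ • (wm i + p.2 i))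
          ∧ Δt⁻¹ • (p.2 i - wm i)
            = crossProduct (lapl h (fun j => (2 : ℝ)⁻¹ • (dm j + p.1 j)) i)
                ((2 : ℝ)⁻¹ • (dm i + p.1 i)) := by
  refine ⟨1 / 36, by norm_num, fun M _ h Δt _ hΔt hκ dm wm hdm => ?_⟩
  have hh : 0 < h := by linarith
  have hratio : Δt / h ≤ 1 / 36 := (div_le_iff₀ hh).2 (by linarith)
  have hsmall : Δt ^ 2 * ‖laplCLM M h‖ ≤ 1 / 108 :=
    calc Δt ^ 2 * ‖laplCLM M h‖ ≤ Δt ^ 2 * (12 * h⁻¹ ^ 2) := by grw [norm_laplCLM_le]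
    _ = 12 * (Δt / h) ^ 2 := by ring
    _ ≤ 12 * (1 / 36) ^ 2 := by gcongr
    _ = 1 / 108 := by norm_num
  have hd (i : Fin 3 → ZMod M) : dm i ⬝ᵥ dm i = 1 := by
    simpa [enorm3, dotProduct, sq] using hdm i
  exact existsUnique_midpoint_step hΔt.ne' hsmall dm wm hd
end
end
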